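/- Let n ≥ 2, ε ∈ {+1, −1}, let t_1,…,t_{n−1} and a_1,…,a_n be positive real numbers. Then ∫ exp(−2π Σ_{i=1}^{n−1} (a_i²/t_i² + Σ_{j=i+1}^{n} (a_j²/t_i²) · z_{i,j}·conj(z_{i,j}))) · exp(−2π ε i Σ_{i=1}^{n−1} (z_{i,i+1} + conj(z_{i,i+1}))) ∏_{1 ≤ i < j ≤ n} d_ℂ z_{i,j} = ∏_{i=1}^{n−1} exp(−2π (t_i²/a_{i+1}² + a_i²/t_i²)) · t_i^{2(n−i)} · a_{i+1}^{−2i}, where the integral is over all complex tuples (z_{i,j})_{1 ≤ i < j ≤ n}. -/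

import Mathlib

open Real MeasureTheory ComplexConjugate
open scoped ENNReal NNReal Complex

/-!
Writing `z * conj z = |z|²` and `z + conj z = 2 Re z`, the integrand is a constant times a
product, over the coordinates `z_{i,j}`, of one-dimensional Gaussians `exp(-b |w|² + c Re w)`,
the linear term occurring only on the superdiagonal `j = i + 1`. Fubini turns the integral into the
product of the one-dimensional integrals `(π / b) exp(c² / (4b))`. With `b = 2π a_j² / t_i²` and
the measure `2 · Lebesgue`, each coordinate contributes `t_i² / a_j²`, times
`exp(-2π t_i² / a_{i+1}²)` on the superdiagonal (as `ε² = 1`), and collecting the powers of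
`t_i` and `a_j` over the pairs `i < j` gives the right-hand side.
-/

theorem MeasureTheory.sigmaFinite_smul_of_ne_top {α : Type*} [MeasurableSpace α] (μ : Measure α)
    [SigmaFinite μ] {c : ℝ≥0∞} (hc : c ≠ ∞) : SigmaFinite (c • μ) := by
  lift c to ℝ≥0 using hc
  rw [Measure.coe_nnreal_smul]
  infer_instance

theorem Complex.integral_cexp_neg_mul_mul_conj_add (b c : ℂ) (hb : 0 < b.re) :
    ∫ w : ℂ, cexp (-b * (w * conj w) + c * (w + conj w)) = π / b * cexp (c ^ 2 / b) := by
  have h := GaussianFourier.integral_cexp_neg_mul_sq_norm_add hb (2 * c) (1 : ℂ)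
  rw [Complex.finrank_real_complex] at h
  convert h using 3 with w
  · rw [Complex.mul_conj', Complex.add_conj, Complex.inner, map_one, mul_one]
    push_cast
    ring_nf
  · norm_num
  · have hb0 : b ≠ 0 := fun h => by simp [h] at hb
    field_simp
    norm_num

noncomputable def gaussianCharacter (r s : ℝ) (w : ℂ) : ℂ :=
  cexp (-(2 * π * r) * (w * conj w) + -(2 * π * s * Complex.I) * (w + conj w))

theorem integral_gaussianCharacter (r s : ℝ) (hr : 0 < r) :
    ∫ w, gaussianCharacter r s w ∂((2 : ℝ≥0∞) • volume) =
      ((r⁻¹ * Real.exp (-(2 * π * s ^ 2 / r)) : ℝ) : ℂ) := by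
  unfold gaussianCharacter
  rw [integral_smul_measure, Complex.integral_cexp_neg_mul_mul_conj_add _ _ (by simp; positivity),
    ENNReal.toReal_ofNat, Complex.real_smul, Complex.ofReal_mul, Complex.ofReal_exp, ← mul_assoc]
  have hr0 : (r : ℂ) ≠ 0 := by exact_mod_cast hr.ne'
  have hπ : (π : ℂ) ≠ 0 := by exact_mod_cast pi_ne_zero
  congr 1
  · push_cast
    field_simp
  · congr 1
    push_cast
    field_simp
    ring_nf
    rw [Complex.I_sq]
    ring

abbrev UpperPairs (n : ℕ) := {p : Fin n × Fin n // p.1 < p.2}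

namespace UpperPairs

variable {n : ℕ}

def superdiag (i : Fin (n - 1)) : UpperPairs n :=
  ⟨(⟨i, by omega⟩, ⟨i + 1, by omega⟩), Fin.mk_lt_mk.mpr (Nat.lt_succ_self _)⟩

def superdiagCoeff (ε : ℝ) (p : UpperPairs n) : ℝ :=
  if (p.1.2 : ℕ) = p.1.1 + 1 then ε else 0

theorem fst_lt_pred (p : UpperPairs n) : (p.1.1 : ℕ) < n - 1 := by
  have := p.2
  have := p.1.2.2
  omega

@[to_additive]
theorem prod_superdiag {M : Type*} [CommMonoid M] (g : UpperPairs n → M) :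
    ∏ i : Fin (n - 1), g (superdiag i) =
      ∏ p : UpperPairs n, if (p.1.2 : ℕ) = p.1.1 + 1 then g p else 1 := by
  rw [Finset.prod_ite, Finset.prod_const_one, mul_one]
  refine Finset.prod_nbij' superdiag (fun p => ⟨p.1.1, fst_lt_pred p⟩) ?_ ?_ ?_ ?_ ?_
  · simp [superdiag]
  · simp
  · intro i _
    rfl
  · intro p hp
    rw [Finset.mem_filter] at hp
    ext <;> simp [superdiag, hp.2]
  · intro i _
    rfl

theorem prod_mul_pow_card {M : Type*} [CommMonoid M] (f g : ℕ → M) :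
    ∏ p : UpperPairs n, f p.1.1 * g p.1.2 =
      ∏ i : Fin (n - 1), f i ^ (n - 1 - (i : ℕ)) * g (i + 1) ^ ((i : ℕ) + 1) := by
  have hrows : ∏ p : UpperPairs n, f p.1.1 * g p.1.2 =
      ∏ i : Fin n, ∏ j : Fin n, if i < j then f i * g j else 1 := by
    rw [← Finset.prod_subtype (Finset.univ.filter fun p : Fin n × Fin n => p.1 < p.2) (by simp)
      (fun p => f p.1 * g p.2), Finset.prod_filter, ← Finset.univ_product_univ, Finset.prod_product]
  have hf : ∀ i : Fin n, ∏ j : Fin n, (if i < j then f i else 1) = f i ^ (n - 1 - i) := by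
    intro i
    rw [Finset.prod_ite, Finset.prod_const_one, mul_one, Finset.prod_const,
      Finset.filter_lt_eq_Ioi, Fin.card_Ioi]
  have hg : ∀ j : Fin n, ∏ i : Fin n, (if i < j then g j else 1) = g j ^ (j : ℕ) := by
    intro j
    rw [Finset.prod_ite, Finset.prod_const_one, mul_one, Finset.prod_const,
      Finset.filter_gt_eq_Iio, Fin.card_Iio]
  simp_rw [hrows, ite_mul_one, Finset.prod_mul_distrib, hf]
  rw [Finset.prod_comm]
  simp_rw [hg]
  rcases n with _ | m
  · simp
  · rw [Fin.prod_univ_castSucc, Fin.prod_univ_succ]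
    simp

theorem cexp_mul_cexp_eq_prod_gaussianCharacter (A : ℂ) (r : UpperPairs n → ℝ) (ε : ℝ)
    (z : UpperPairs n → ℂ) :
    cexp (-(2 * π * (A + ∑ p, (r p : ℂ) * (z p * conj (z p))))) *
        cexp (-(2 * π * (ε : ℂ) * Complex.I *
          ∑ i : Fin (n - 1), (z (superdiag i) + conj (z (superdiag i))))) =
      cexp (-(2 * π * A)) * ∏ p, gaussianCharacter (r p) (superdiagCoeff ε p) (z p) := by
  have hquad : ∑ p, -(2 * π * (r p : ℂ)) * (z p * conj (z p)) =
      -(2 * π * ∑ p, (r p : ℂ) * (z p * conj (z p))) := by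
    rw [Finset.mul_sum, ← Finset.sum_neg_distrib]
    exact Finset.sum_congr rfl fun p _ => by ring
  have hlin : ∑ p, -(2 * π * (superdiagCoeff ε p : ℂ) * Complex.I) * (z p + conj (z p)) =
      -(2 * π * (ε : ℂ) * Complex.I *
        ∑ i : Fin (n - 1), (z (superdiag i) + conj (z (superdiag i)))) := by
    rw [Finset.mul_sum, sum_superdiag fun p => 2 * π * (ε : ℂ) * Complex.I * (z p + conj (z p)),
      ← Finset.sum_neg_distrib]
    refine Finset.sum_congr rfl fun p _ => ?_
    rw [superdiagCoeff]
    split_ifs <;> simp [mul_assoc]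
  unfold gaussianCharacter
  rw [← Complex.exp_sum, ← Complex.exp_add, ← Complex.exp_add,
    Finset.sum_add_distrib (f := fun p => -(2 * π * (r p : ℂ)) * (z p * conj (z p))), hquad, hlin]
  ring_nf

theorem exp_mul_prod_gaussian_weights (t a : ℕ → ℝ) (ε : ℝ) (hε : ε ^ 2 = 1) :
    Real.exp (-(2 * π * ∑ i ∈ Finset.range (n - 1), a i ^ 2 / t i ^ 2)) *
        ∏ p : UpperPairs n, ((a p.1.2 ^ 2 / t p.1.1 ^ 2)⁻¹ *
          Real.exp (-(2 * π * superdiagCoeff ε p ^ 2 / (a p.1.2 ^ 2 / t p.1.1 ^ 2)))) =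
      ∏ i : Fin (n - 1), (Real.exp (-(2 * π * (t i ^ 2 / a (i + 1) ^ 2 + a i ^ 2 / t i ^ 2))) *
        t i ^ (2 * (n - 1 - i)) * a (i + 1) ^ (-(2 * ((i : ℤ) + 1)))) := by
  have hweight : ∀ p : UpperPairs n, (a p.1.2 ^ 2 / t p.1.1 ^ 2)⁻¹ *
      Real.exp (-(2 * π * superdiagCoeff ε p ^ 2 / (a p.1.2 ^ 2 / t p.1.1 ^ 2))) =
      t p.1.1 ^ 2 * (a p.1.2 ^ 2)⁻¹ * if (p.1.2 : ℕ) = p.1.1 + 1 then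
        Real.exp (-(2 * π * (t p.1.1 ^ 2 / a p.1.2 ^ 2))) else 1 := by
    intro p
    rw [superdiagCoeff]
    split_ifs
    · rw [hε, mul_one, div_div_eq_mul_div, inv_div, mul_div_assoc, div_eq_mul_inv]
    · simp [div_eq_mul_inv]
  have hzpow : ∀ (x : ℝ) (k : ℕ), x ^ (-(2 * ((k : ℤ) + 1))) = ((x ^ 2)⁻¹) ^ (k + 1) := by
    intro x k
    rw [zpow_neg, ← inv_zpow, ← inv_pow]
    norm_cast
    rw [pow_mul]
  rw [Finset.prod_congr rfl fun p _ => hweight p, Finset.prod_mul_distrib,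
    prod_mul_pow_card (fun i => t i ^ 2) (fun j => (a j ^ 2)⁻¹),
    ← prod_superdiag fun p => Real.exp (-(2 * π * (t p.1.1 ^ 2 / a p.1.2 ^ 2))),
    ← Fin.sum_univ_eq_sum_range (fun i => a i ^ 2 / t i ^ 2), Finset.mul_sum,
    ← Finset.sum_neg_distrib, Real.exp_sum, ← Finset.prod_mul_distrib, ← Finset.prod_mul_distrib]
  refine Finset.prod_congr rfl fun i _ => ?_
  rw [hzpow, pow_mul, mul_add, neg_add, Real.exp_add]
  simp only [superdiag]
  ring

end UpperPairs

open UpperPairs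

/-- Complex Gaussian integral with character over upper triangular unipotent coordinates:
`∫ exp(−2π Σ_{i=1}^{n−1} (a_i²/t_i² + Σ_{j>i} (a_j²/t_i²) z_{i,j} conj(z_{i,j})))
   exp(−2π ε i Σ (z_{i,i+1} + conj(z_{i,i+1}))) ∏ d_ℂ z
  = ∏_{i=1}^{n−1} exp(−2π (t_i²/a_{i+1}² + a_i²/t_i²)) t_i^{2(n−i)} a_{i+1}^{−2i}`
(indices written here `0`-based: the paper's `i` is `i+1`);
each `d_ℂ z_{i,j}` is twice the Lebesgue measure on `ℂ`. -/
theorem gaussian_unipotent_character_integral_complex (n : ℕ) (ε : ℝ)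
    (hε : ε = 1 ∨ ε = -1) (t a : ℕ → ℝ)
    (ht : ∀ i, i < n - 1 → 0 < t i) (ha : ∀ i, i < n → 0 < a i) :
    (∫ z : {p : Fin n × Fin n // p.1 < p.2} → ℂ,
        Complex.exp (-(2 * π * (((∑ i ∈ Finset.range (n - 1),
              (a i ^ 2 / t i ^ 2 : ℝ)) : ℂ) +
            ∑ p : {p : Fin n × Fin n // p.1 < p.2},
              ((a p.val.2 ^ 2 / t p.val.1 ^ 2 : ℝ) : ℂ) * (z p * conj (z p))))) *
          Complex.exp (-(2 * π * (ε : ℂ) * Complex.I *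
            ∑ i : Fin (n - 1),
              (z ⟨(⟨i.val, by have h := i.isLt; omega⟩,
                    ⟨i.val + 1, by have h := i.isLt; omega⟩),
                  Fin.mk_lt_mk.mpr (Nat.lt_succ_self _)⟩ +
               conj (z ⟨(⟨i.val, by have h := i.isLt; omega⟩,
                    ⟨i.val + 1, by have h := i.isLt; omega⟩),
                  Fin.mk_lt_mk.mpr (Nat.lt_succ_self _)⟩))))
      ∂(MeasureTheory.Measure.pi
          fun _ : {p : Fin n × Fin n // p.1 < p.2} => (2 : ENNReal) • (volume : Measure ℂ))) =
      ∏ i : Fin (n - 1),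
        ((Real.exp (-(2 * π * (t i.val ^ 2 / a (i.val + 1) ^ 2 + a i.val ^ 2 / t i.val ^ 2))) *
            t i.val ^ (2 * (n - 1 - i.val)) *
            a (i.val + 1) ^ (-(2 * ((i.val : ℤ) + 1))) : ℝ) : ℂ) := by
  have : SigmaFinite ((2 : ℝ≥0∞) • (volume : Measure ℂ)) :=
    sigmaFinite_smul_of_ne_top _ ENNReal.ofNat_ne_top
  have hε2 : ε ^ 2 = 1 := by rcases hε with rfl | rfl <;> norm_num
  have hr : ∀ p : UpperPairs n, 0 < a p.1.2 ^ 2 / t p.1.1 ^ 2 := fun p =>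
    div_pos (pow_pos (ha _ p.1.2.2) 2) (pow_pos (ht _ (fst_lt_pred p)) 2)
  refine (integral_congr_ae (ae_of_all _ fun z =>
    cexp_mul_cexp_eq_prod_gaussianCharacter _ (fun p => a p.1.2 ^ 2 / t p.1.1 ^ 2) ε z)).trans ?_
  rw [integral_const_mul, integral_fintype_prod_eq_prod
    fun p => gaussianCharacter (a p.1.2 ^ 2 / t p.1.1 ^ 2) (superdiagCoeff ε p)]
  simp_rw [integral_gaussianCharacter _ _ (hr _)]
  exact_mod_cast congrArg Complex.ofReal (exp_mul_prod_gaussian_weights (n := n) t a ε hε2)
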